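/- arXiv:2509.15850 — 2 statements merged into one kernel-verified Lean document; each statement's English description precedes it below -/
import Mathlib

section
/- Every parabolic subgroup of W has a complement in its normalizer: if P = Z_W(X) for some subspace X of V, then there exists a subgroup H of the normalizer N_W(P) such that P ∩ H is trivial and P·H = N_W(P). -/
open scoped RealInnerProductSpace

variable {V : Type*} [NormedAddCommGroup V] [InnerProductSpace ℝ V] [FiniteDimensional ℝ V]

/-- `r` is a reflection: there is a nonzero root `α` with `r α = -α` and `r` fixes
every vector orthogonal to `α`. -/
def IsReflection (r : V ≃ₗᵢ[ℝ] V) : Prop :=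
  ∃ α : V, α ≠ 0 ∧ r α = -α ∧ ∀ v : V, ⟪α, v⟫ = 0 → r v = v

/-- The pointwise stabilizer in `W` of a set `s ⊆ V`. -/
def pointwiseStabilizer (W : Subgroup (V ≃ₗᵢ[ℝ] V)) (s : Set V) : Subgroup (V ≃ₗᵢ[ℝ] V) where
  carrier := {w | w ∈ W ∧ ∀ v ∈ s, w v = v}
  one_mem' := ⟨W.one_mem, fun v _ => rfl⟩
  mul_mem' := fun {a b} ha hb => ⟨W.mul_mem ha.1 hb.1, fun v hv => by
    have h : (a * b) v = a (b v) := rfl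
    rw [h, hb.2 v hv, ha.2 v hv]⟩
  inv_mem' := fun {a} ha => ⟨W.inv_mem ha.1, fun v hv => by
    show a.symm v = v
    conv_lhs => rw [← ha.2 v hv]
    exact a.symm_apply_apply v⟩

/-!
Let `Φ` be the unit roots of `W` and let `c` be a regular vector obtained by perturbing a point of
`X` that lies on no reflecting hyperplane except those containing `X`. The complement `H` consists
of the elements of `N_W(P)` that keep `c` on the same side of every hyperplane `αᗮ` with `s_α ∈ P`.

If `p ∈ P ∩ H`, then `p` fixes `X`, so it does not move `c` across the remaining hyperplanes either:
`p` preserves the chamber of `c`, hence `p = 1` because `W` acts freely on chambers (proved with a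
simple system and the deletion condition). Given `n ∈ N_W(P)`, the `k ∈ P` minimising
`‖k n c - c‖` leaves no hyperplane of `P` between `k n c` and `c`, so `k n ∈ H`.
-/

set_option linter.unusedSectionVars false

noncomputable def reflectionAlong (α : V) : V ≃ₗᵢ[ℝ] V := (ℝ ∙ α)ᗮ.reflection

section Reflections

variable {α β : V}

theorem reflectionAlong_apply (hα : ‖α‖ = 1) (v : V) :
    reflectionAlong α v = v - (2 * ⟪α, v⟫) • α := by
  rw [reflectionAlong, Submodule.reflection_orthogonal_apply,
    Submodule.reflection_singleton_apply, hα]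
  module

@[simp]
theorem reflectionAlong_inv (α : V) : (reflectionAlong α)⁻¹ = reflectionAlong α :=
  Submodule.reflection_inv

@[simp]
theorem reflectionAlong_mul_self (α : V) : reflectionAlong α * reflectionAlong α = 1 :=
  Submodule.reflection_mul_reflection _

@[simp]
theorem reflectionAlong_reflectionAlong (α v : V) :
    reflectionAlong α (reflectionAlong α v) = v :=
  Submodule.reflection_reflection _ v

theorem reflectionAlong_self (hα : ‖α‖ = 1) : reflectionAlong α α = -α := by
  rw [reflectionAlong_apply hα, real_inner_self_eq_norm_sq, hα]
  module

theorem reflectionAlong_of_inner_eq_zero {v : V} (h : ⟪α, v⟫ = 0) : reflectionAlong α v = v :=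
  Submodule.reflection_mem_subspace_eq_self (Submodule.mem_orthogonal_singleton_iff_inner_right.2 h)

theorem reflectionAlong_neg (hα : ‖α‖ = 1) : reflectionAlong (-α) = reflectionAlong α := by
  ext v
  rw [reflectionAlong_apply (by rwa [norm_neg]), reflectionAlong_apply hα, inner_neg_left]
  module

theorem inner_inv_apply (g : V ≃ₗᵢ[ℝ] V) (u v : V) : ⟪g⁻¹ u, v⟫ = ⟪u, g v⟫ := by
  simpa using (g.inner_map_map (g⁻¹ u) v).symm

theorem inner_apply_inv (g : V ≃ₗᵢ[ℝ] V) (u v : V) : ⟪u, g⁻¹ v⟫ = ⟪g u, v⟫ := by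
  rw [← inner_inv_apply, inv_inv]

theorem reflectionAlong_map (hα : ‖α‖ = 1) (g : V ≃ₗᵢ[ℝ] V) :
    reflectionAlong (g α) = g * reflectionAlong α * g⁻¹ := by
  ext v
  have hgα : ‖g α‖ = 1 := by rw [g.norm_map, hα]
  simp [reflectionAlong_apply hgα, reflectionAlong_apply hα, ← inner_apply_inv]

theorem eq_reflectionAlong_of_apply_eq_neg {r : V ≃ₗᵢ[ℝ] V} (hα : ‖α‖ = 1) (hroot : r α = -α)
    (hfix : ∀ v, ⟪α, v⟫ = 0 → r v = v) : r = reflectionAlong α := by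
  ext v
  have hperp : ⟪α, v - ⟪α, v⟫ • α⟫ = 0 := by
    rw [inner_sub_right, real_inner_smul_right, real_inner_self_eq_norm_sq, hα]
    ring
  calc r v = r (v - ⟪α, v⟫ • α) + ⟪α, v⟫ • r α := by rw [← map_smul, ← map_add, sub_add_cancel]
    _ = reflectionAlong α v := by rw [hfix _ hperp, hroot, reflectionAlong_apply hα]; module

theorem IsReflection.exists_eq_reflectionAlong {r : V ≃ₗᵢ[ℝ] V} (h : IsReflection r) :
    ∃ α : V, ‖α‖ = 1 ∧ r = reflectionAlong α := by
  obtain ⟨α, hα0, hroot, hfix⟩ := h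
  have hnorm : ‖α‖ ≠ 0 := norm_ne_zero_iff.2 hα0
  refine ⟨‖α‖⁻¹ • α, norm_smul_inv_norm hα0, eq_reflectionAlong_of_apply_eq_neg
    (norm_smul_inv_norm hα0) (by rw [map_smul, hroot, smul_neg]) fun v hv => hfix v ?_⟩
  rw [real_inner_smul_left] at hv
  exact (mul_eq_zero.1 hv).resolve_left (inv_ne_zero hnorm)

theorem eq_or_eq_neg_of_reflectionAlong_eq (hα : ‖α‖ = 1) (hβ : ‖β‖ = 1)
    (h : reflectionAlong α = reflectionAlong β) : β = α ∨ β = -α := by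
  have hβα : β = ⟪α, β⟫ • α := by
    have h' := reflectionAlong_self hβ
    rw [← h, reflectionAlong_apply hα] at h'
    linear_combination (norm := module) (1 / 2 : ℝ) • h'
  have habs : |⟪α, β⟫| = 1 := by
    rw [← hβ, hβα, norm_smul, hα, mul_one, Real.norm_eq_abs, ← hβα]
  rcases abs_eq zero_le_one |>.1 habs with h1 | h1
  · exact .inl (by rw [hβα, h1, one_smul])
  · exact .inr (by rw [hβα, h1, neg_one_smul])

theorem norm_reflectionAlong_sub_sq (hα : ‖α‖ = 1) (y d : V) :
    ‖reflectionAlong α y - d‖ ^ 2 = ‖y - d‖ ^ 2 + 4 * ⟪α, y⟫ * ⟪α, d⟫ := by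
  rw [reflectionAlong_apply hα, ← real_inner_self_eq_norm_sq, ← real_inner_self_eq_norm_sq]
  simp only [inner_sub_left, inner_sub_right, real_inner_smul_left, real_inner_smul_right]
  rw [real_inner_self_eq_norm_sq α, hα, real_inner_comm y α, real_inner_comm d α]
  ring

end Reflections

section RootsOf

def rootsOf (K : Subgroup (V ≃ₗᵢ[ℝ] V)) : Set V :=
  {α | ‖α‖ = 1 ∧ reflectionAlong α ∈ K}

variable {K L : Subgroup (V ≃ₗᵢ[ℝ] V)}

theorem rootsOf_mono (h : K ≤ L) : rootsOf K ⊆ rootsOf L :=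
  fun _ hα => ⟨hα.1, h hα.2⟩

theorem apply_mem_rootsOf_iff {g : V ≃ₗᵢ[ℝ] V} (hg : g ∈ Subgroup.normalizer (K : Set _))
    {α : V} : g α ∈ rootsOf K ↔ α ∈ rootsOf K := by
  by_cases hα : ‖α‖ = 1
  · simp only [rootsOf, Set.mem_ofPred_eq, g.norm_map, hα, reflectionAlong_map hα, true_and]
    exact (Subgroup.mem_normalizer_iff.1 hg _).symm
  · simp [rootsOf, g.norm_map, hα]

theorem finite_rootsOf (hK : (K : Set (V ≃ₗᵢ[ℝ] V)).Finite) : (rootsOf K).Finite := by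
  have hfiber (w : V ≃ₗᵢ[ℝ] V) : {α : V | ‖α‖ = 1 ∧ reflectionAlong α = w}.Finite := by
    rcases Set.eq_empty_or_nonempty {α : V | ‖α‖ = 1 ∧ reflectionAlong α = w} with h | ⟨α, hα, rfl⟩
    · simp [h]
    · exact (Set.toFinite {α, -α}).subset fun β hβ =>
        eq_or_eq_neg_of_reflectionAlong_eq hα hβ.1 hβ.2.symm
  exact (hK.biUnion fun w _ => hfiber w).subset fun α hα => Set.mem_biUnion hα.2 ⟨hα.1, rfl⟩

end RootsOf

section Cones

variable {S : Set V} {c x : V}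

theorem inner_nonneg_of_mem_hull (hS : ∀ δ ∈ S, 0 ≤ ⟪δ, c⟫) (hx : x ∈ PointedCone.hull ℝ S) :
    0 ≤ ⟪x, c⟫ := by
  induction hx using Submodule.span_induction with
  | mem y hy => exact hS y hy
  | zero => simp
  | add y z _ _ hy hz => rw [inner_add_left]; exact add_nonneg hy hz
  | smul a y _ hy => rw [← Nonneg.coe_smul, real_inner_smul_left]; exact mul_nonneg a.2 hy

theorem eq_zero_or_inner_pos_of_mem_hull (hS : ∀ δ ∈ S, 0 < ⟪δ, c⟫)
    (hx : x ∈ PointedCone.hull ℝ S) : x = 0 ∨ 0 < ⟪x, c⟫ := by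
  induction hx using Submodule.span_induction with
  | mem y hy => exact .inr (hS y hy)
  | zero => exact .inl rfl
  | add y z _ _ hy hz =>
    rcases hy with rfl | hy
    · rwa [zero_add]
    rcases hz with rfl | hz
    · rw [add_zero]; exact .inr hy
    · exact .inr (by rw [inner_add_left]; exact add_pos hy hz)
  | smul a y _ hy =>
    rw [← Nonneg.coe_smul]
    rcases hy with rfl | hy
    · exact .inl (smul_zero _)
    rcases a.2.eq_or_lt with ha | ha
    · exact .inl (by rw [← ha, zero_smul])
    · exact .inr (by rw [real_inner_smul_left]; exact mul_pos ha hy)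

theorem exists_inner_pos_of_mem_hull (hx : x ∈ PointedCone.hull ℝ S) (hx0 : x ≠ 0) :
    ∃ δ ∈ S, 0 < ⟪δ, x⟫ := by
  by_contra! h
  have := inner_nonneg_of_mem_hull (c := -x) (fun δ hδ => by
    rw [inner_neg_right]; linarith [h δ hδ]) hx
  rw [inner_neg_right, real_inner_self_eq_norm_sq] at this
  exact hx0 (norm_eq_zero.1 (by nlinarith [norm_nonneg x]))

theorem exists_eq_smul_add_of_mem_hull {Δ : Finset V} {δ : V} (hδ : δ ∈ Δ)
    (hx : x ∈ PointedCone.hull ℝ (Δ : Set V)) :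
    ∃ a : ℝ, 0 ≤ a ∧ ∃ y ∈ PointedCone.hull ℝ ((Δ : Set V) \ {δ}), x = a • δ + y := by
  rw [← Set.insert_eq_of_mem (Finset.mem_coe.2 hδ), ← Set.insert_sdiff_singleton,
    Submodule.mem_span_insert] at hx
  obtain ⟨a, y, hy, rfl⟩ := hx
  exact ⟨a, a.2, y, hy, by rw [Nonneg.coe_smul]⟩

end Cones

structure IsUnitRootSystem (Φ : Finset V) : Prop where
  norm_eq_one : ∀ α ∈ Φ, ‖α‖ = 1
  reflectionAlong_mem : ∀ α ∈ Φ, ∀ β ∈ Φ, reflectionAlong α β ∈ Φ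

def IsRegularVector (Ψ : Set V) (c : V) : Prop :=
  ∀ α ∈ Ψ, ⟪α, c⟫ ≠ 0

/-- For regular `x` and `y`: they lie in the same chamber. -/
def SameSide (Ψ : Set V) (x y : V) : Prop :=
  ∀ α ∈ Ψ, 0 < ⟪α, x⟫ ↔ 0 < ⟪α, y⟫

noncomputable def wordProd (l : List V) : V ≃ₗᵢ[ℝ] V :=
  (l.map reflectionAlong).prod

@[simp]
theorem wordProd_nil : wordProd ([] : List V) = 1 := rfl

@[simp]
theorem wordProd_cons (δ : V) (l : List V) : wordProd (δ :: l) = reflectionAlong δ * wordProd l :=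
  List.prod_cons

@[simp]
theorem wordProd_append (l₁ l₂ : List V) : wordProd (l₁ ++ l₂) = wordProd l₁ * wordProd l₂ := by
  simp [wordProd]

theorem exists_wordProd_eq_of_mem_closure {S : Set V} {g : V ≃ₗᵢ[ℝ] V}
    (hg : g ∈ Subgroup.closure (reflectionAlong '' S)) :
    ∃ l : List V, (∀ δ ∈ l, δ ∈ S) ∧ wordProd l = g := by
  induction hg using Subgroup.closure_induction_left with
  | one => exact ⟨[], by simp, rfl⟩
  | mul_left _ hx _ _ ih =>
    obtain ⟨δ, hδ, rfl⟩ := hx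
    obtain ⟨l, hl, rfl⟩ := ih
    exact ⟨δ :: l, by simpa [hδ] using hl, wordProd_cons δ l⟩
  | inv_mul_cancel _ hx _ _ ih =>
    obtain ⟨δ, hδ, rfl⟩ := hx
    obtain ⟨l, hl, rfl⟩ := ih
    exact ⟨δ :: l, by simpa [hδ] using hl, by rw [wordProd_cons, reflectionAlong_inv]⟩

namespace IsUnitRootSystem

variable {Φ : Finset V}

theorem neg_mem (hΦ : IsUnitRootSystem Φ) {α : V} (hα : α ∈ Φ) : -α ∈ Φ := by
  simpa [reflectionAlong_self (hΦ.norm_eq_one α hα)] using hΦ.reflectionAlong_mem α hα α hα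

theorem ne_zero (hΦ : IsUnitRootSystem Φ) {α : V} (hα : α ∈ Φ) : α ≠ 0 :=
  norm_ne_zero_iff.1 (by rw [hΦ.norm_eq_one α hα]; exact one_ne_zero)

theorem wordProd_apply_mem (hΦ : IsUnitRootSystem Φ) {l : List V} (hl : ∀ δ ∈ l, δ ∈ Φ)
    {β : V} (hβ : β ∈ Φ) : wordProd l β ∈ Φ := by
  induction l with
  | nil => exact hβ
  | cons δ l ih =>
    simp only [List.mem_cons, forall_eq_or_imp] at hl
    exact hΦ.reflectionAlong_mem δ hl.1 _ (ih hl.2)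

end IsUnitRootSystem

structure IsSimpleSystem (Φ : Finset V) (c : V) (Δ : Finset V) : Prop where
  subset : Δ ⊆ Φ
  inner_pos : ∀ δ ∈ Δ, 0 < ⟪δ, c⟫
  mem_hull : ∀ β ∈ Φ, 0 < ⟪β, c⟫ → β ∈ PointedCone.hull ℝ (Δ : Set V)
  notMem_hull_sdiff : ∀ δ ∈ Δ, δ ∉ PointedCone.hull ℝ ((Δ : Set V) \ {δ})

theorem exists_isSimpleSystem (Φ : Finset V) (c : V) : ∃ Δ, IsSimpleSystem Φ c Δ := by
  classical
  set Φpos := Φ.filter fun β => 0 < ⟪β, c⟫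
  obtain ⟨Δ, hΔ, hmin⟩ := (Φpos.powerset.filter fun S : Finset V =>
      ∀ β ∈ Φpos, β ∈ PointedCone.hull ℝ (↑S : Set V)).exists_min_image Finset.card
    ⟨Φpos, by simpa using fun β hβ => PointedCone.subset_hull (Finset.mem_coe.2 hβ)⟩
  simp only [Finset.mem_filter, Finset.mem_powerset, Φpos] at hΔ hmin
  refine ⟨Δ, fun δ hδ => (Finset.mem_filter.1 (hΔ.1 hδ)).1,
    fun δ hδ => (Finset.mem_filter.1 (hΔ.1 hδ)).2,
    fun β hβ hβc => hΔ.2 β ⟨hβ, hβc⟩, fun δ hδ hmem => ?_⟩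
  have hspan : PointedCone.hull ℝ (Δ : Set V) = PointedCone.hull ℝ ((Δ : Set V) \ {δ}) := by
    have h := Submodule.span_insert_eq_span hmem
    rwa [Set.insert_sdiff_singleton, Set.insert_eq_of_mem (Finset.mem_coe.2 hδ)] at h
  have hcard := hmin (Δ.erase δ)
    ⟨(Finset.erase_subset δ Δ).trans hΔ.1, fun β hβ => by
      rw [Finset.coe_erase, ← hspan]; exact hΔ.2 β hβ⟩
  rw [Finset.card_erase_of_mem hδ] at hcard
  have := Finset.card_pos.2 ⟨δ, hδ⟩
  omega

namespace IsSimpleSystem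

variable {Φ Δ : Finset V} {c : V}

theorem smul_ne_add (hΔ : IsSimpleSystem Φ c Δ) {δ y x : V} (hδ : δ ∈ Δ) (s : ℝ)
    (hy : y ∈ PointedCone.hull ℝ ((Δ : Set V) \ {δ})) (hyc : 0 < ⟪y, c⟫)
    (hx : x ∈ PointedCone.hull ℝ (Δ : Set V)) : s • δ ≠ y + x := by
  intro h
  obtain ⟨a, ha, x', hx', rfl⟩ := exists_eq_smul_add_of_mem_hull hδ hx
  have hx'c : 0 ≤ ⟪x', c⟫ := inner_nonneg_of_mem_hull (fun γ hγ => (hΔ.inner_pos γ hγ.1).le) hx'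
  rcases lt_or_ge a s with has | has
  · apply hΔ.notMem_hull_sdiff δ hδ
    have hδeq : δ = (s - a)⁻¹ • (y + x') := by
      rw [eq_inv_smul_iff₀ (sub_ne_zero.2 has.ne'), sub_smul, h]
      abel
    have hmem := PointedCone.smul_mem _ (inv_nonneg.2 (sub_nonneg.2 has.le)) (add_mem hy hx')
    rwa [← hδeq] at hmem
  · have hc := congrArg (⟪·, c⟫) h
    simp only [inner_add_left, real_inner_smul_left] at hc
    nlinarith [hΔ.inner_pos δ hδ]

theorem inner_reflectionAlong_pos (hΦ : IsUnitRootSystem Φ) (hc : IsRegularVector (Φ : Set V) c)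
    (hΔ : IsSimpleSystem Φ c Δ) {α β : V} (hα : α ∈ Δ) (hβ : β ∈ Φ) (hβc : 0 < ⟪β, c⟫)
    (hβα : β ≠ α) : 0 < ⟪reflectionAlong α β, c⟫ := by
  have hα1 := hΦ.norm_eq_one α (hΔ.subset hα)
  have hγ := hΦ.reflectionAlong_mem α (hΔ.subset hα) β hβ
  refine (hc _ hγ).lt_or_gt.resolve_left fun hγc => ?_
  have hnegγ := hΔ.mem_hull _ (hΦ.neg_mem hγ) (by rw [inner_neg_left]; linarith)
  obtain ⟨a, ha, β', hβ', hβeq⟩ := exists_eq_smul_add_of_mem_hull hα (hΔ.mem_hull β hβ hβc)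
  have hβ'c : 0 < ⟪β', c⟫ := by
    refine (eq_zero_or_inner_pos_of_mem_hull (fun δ hδ => hΔ.inner_pos δ hδ.1) hβ').resolve_left ?_
    rintro rfl
    rw [add_zero] at hβeq
    have ha1 : a = 1 := by
      simpa [hβeq, norm_smul, hα1, abs_of_nonneg ha] using hΦ.norm_eq_one β hβ
    exact hβα (by rw [hβeq, ha1, one_smul])
  apply hΔ.smul_ne_add hα (2 * ⟪α, β⟫ - a) hβ' hβ'c hnegγ
  rw [reflectionAlong_apply hα1, hβeq]
  module

theorem reflectionAlong_mem_closure_of_inner_pos (hΦ : IsUnitRootSystem Φ)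
    (hc : IsRegularVector (Φ : Set V) c) (hΔ : IsSimpleSystem Φ c Δ) {β : V} (hβ : β ∈ Φ)
    (hβc : 0 < ⟪β, c⟫) :
    reflectionAlong β ∈ Subgroup.closure (reflectionAlong '' (Δ : Set V)) := by
  set G := Subgroup.closure (reflectionAlong '' (Δ : Set V))
  -- induction on the height `⟪β, c⟫`: reflecting in a suitable simple root lowers it
  induction hn : (Φ.filter fun γ => ⟪γ, c⟫ < ⟪β, c⟫).card using Nat.strong_induction_on
    generalizing β with
  | _ n ih =>
  by_cases hβΔ : β ∈ Δ
  · exact Subgroup.subset_closure (Set.mem_image_of_mem _ hβΔ)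
  obtain ⟨δ, hδ, hδβ⟩ := exists_inner_pos_of_mem_hull (hΔ.mem_hull β hβ hβc) (hΦ.ne_zero hβ)
  set γ := reflectionAlong δ β
  have hγ : γ ∈ Φ := hΦ.reflectionAlong_mem δ (hΔ.subset hδ) β hβ
  have hγc : 0 < ⟪γ, c⟫ :=
    hΔ.inner_reflectionAlong_pos hΦ hc hδ hβ hβc fun h => hβΔ (h ▸ hδ)
  have hγβ : ⟪γ, c⟫ < ⟪β, c⟫ := by
    rw [show γ = β - (2 * ⟪δ, β⟫) • δ from
      reflectionAlong_apply (hΦ.norm_eq_one δ (hΔ.subset hδ)) β, inner_sub_left,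
      real_inner_smul_left]
    nlinarith [hΔ.inner_pos δ hδ]
  have hcard : (Φ.filter fun x => ⟪x, c⟫ < ⟪γ, c⟫).card < n := hn ▸ Finset.card_lt_card
    ((Finset.ssubset_iff_of_subset fun x hx => by
        rw [Finset.mem_filter] at hx ⊢; exact ⟨hx.1, hx.2.trans hγβ⟩).2
      ⟨γ, Finset.mem_filter.2 ⟨hγ, hγβ⟩, fun h => lt_irrefl _ (Finset.mem_filter.1 h).2⟩)
  have hδG : reflectionAlong δ ∈ G := Subgroup.subset_closure (Set.mem_image_of_mem _ hδ)
  have hconj := reflectionAlong_map (hΦ.norm_eq_one γ hγ) (reflectionAlong δ)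
  rw [reflectionAlong_reflectionAlong] at hconj
  rw [hconj]
  exact mul_mem (mul_mem hδG (ih _ hcard hγ hγc rfl)) (inv_mem hδG)

theorem reflectionAlong_mem_closure (hΦ : IsUnitRootSystem Φ) (hc : IsRegularVector (Φ : Set V) c)
    (hΔ : IsSimpleSystem Φ c Δ) {β : V} (hβ : β ∈ Φ) :
    reflectionAlong β ∈ Subgroup.closure (reflectionAlong '' (Δ : Set V)) := by
  rcases (hc β hβ).lt_or_gt with hβc | hβc
  · rw [← reflectionAlong_neg (hΦ.norm_eq_one β hβ)]
    exact hΔ.reflectionAlong_mem_closure_of_inner_pos hΦ hc (hΦ.neg_mem hβ)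
      (by rw [inner_neg_left]; linarith)
  · exact hΔ.reflectionAlong_mem_closure_of_inner_pos hΦ hc hβ hβc

/-- The deletion condition: where `wordProd · α` first turns negative, reading the word from the
right, the image of `α` is the simple root `δ` of the letter applied next, so `δ` and `α` cancel. -/
theorem exists_wordProd_eq_mul_reflectionAlong (hΦ : IsUnitRootSystem Φ)
    (hc : IsRegularVector (Φ : Set V) c) (hΔ : IsSimpleSystem Φ c Δ) {α : V} (hα : α ∈ Δ)
    {l : List V} (hl : ∀ δ ∈ l, δ ∈ Δ) (hneg : ⟪wordProd l α, c⟫ < 0) :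
    ∃ l' : List V, (∀ δ ∈ l', δ ∈ Δ) ∧ l'.length < l.length ∧
      wordProd l' = wordProd l * reflectionAlong α := by
  induction l with
  | nil => exact absurd hneg (hΔ.inner_pos α hα).not_gt
  | cons δ l ih =>
    simp only [List.mem_cons, forall_eq_or_imp] at hl
    rw [wordProd_cons, LinearIsometryEquiv.coe_mul, Function.comp_apply] at hneg
    rcases lt_or_ge ⟪wordProd l α, c⟫ 0 with hlα | hlα
    · obtain ⟨l', hl', hlen, heq⟩ := ih hl.2 hlα
      refine ⟨δ :: l', by simpa [hl.1] using hl', by simpa using hlen, ?_⟩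
      rw [wordProd_cons, wordProd_cons, heq, mul_assoc]
    · have hβ := hΦ.wordProd_apply_mem (fun x hx => hΔ.subset (hl.2 x hx)) (hΔ.subset hα)
      have hβδ : wordProd l α = δ := by
        by_contra hne
        exact hneg.not_gt (hΔ.inner_reflectionAlong_pos hΦ hc hl.1 hβ
          (lt_of_le_of_ne hlα (hc _ hβ).symm) hne)
      refine ⟨l, hl.2, by simp, ?_⟩
      rw [wordProd_cons, ← hβδ, reflectionAlong_map (hΦ.norm_eq_one α (hΔ.subset hα))]
      simp [mul_assoc]

theorem wordProd_eq_one (hΦ : IsUnitRootSystem Φ) (hc : IsRegularVector (Φ : Set V) c)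
    (hΔ : IsSimpleSystem Φ c Δ) {l : List V} (hl : ∀ δ ∈ l, δ ∈ Δ)
    (hpos : ∀ δ ∈ Δ, 0 < ⟪wordProd l δ, c⟫) : wordProd l = 1 := by
  induction hn : l.length using Nat.strong_induction_on generalizing l with
  | _ n ih =>
  rcases l.eq_nil_or_concat' with rfl | ⟨l, α, rfl⟩
  · rfl
  simp only [List.mem_append, List.mem_singleton] at hl
  have hα : α ∈ Δ := hl α (.inr rfl)
  rw [wordProd_append] at hpos ⊢
  rcases lt_or_ge ⟪wordProd l α, c⟫ 0 with hneg | hnonneg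
  · obtain ⟨l', hl', hlen, heq⟩ :=
      exists_wordProd_eq_mul_reflectionAlong hΦ hc hΔ hα (fun δ hδ => hl δ (.inl hδ)) hneg
    have hwl : wordProd [α] = reflectionAlong α := by simp
    rw [hwl, ← heq] at hpos ⊢
    exact ih _ (by simp at hn; omega) hl' hpos rfl
  · have := hpos α hα
    simp [reflectionAlong_self (hΦ.norm_eq_one α (hΔ.subset hα))] at this
    linarith

end IsSimpleSystem

theorem eq_one_of_sameSide {Φ : Finset V} {c : V} (hΦ : IsUnitRootSystem Φ)
    (hc : IsRegularVector (Φ : Set V) c) {g : V ≃ₗᵢ[ℝ] V}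
    (hg : g ∈ Subgroup.closure (reflectionAlong '' (Φ : Set V))) (hgc : SameSide Φ c (g c)) :
    g = 1 := by
  obtain ⟨Δ, hΔ⟩ := exists_isSimpleSystem Φ c
  have hle : Subgroup.closure (reflectionAlong '' (Φ : Set V)) ≤
      Subgroup.closure (reflectionAlong '' (Δ : Set V)) :=
    (Subgroup.closure_le _).2 (Set.image_subset_iff.2 fun β hβ =>
      hΔ.reflectionAlong_mem_closure hΦ hc hβ)
  obtain ⟨l, hl, hlg⟩ := exists_wordProd_eq_of_mem_closure (hle (inv_mem hg))
  rw [← inv_eq_one, ← hlg]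
  refine hΔ.wordProd_eq_one hΦ hc hl fun δ hδ => ?_
  rw [hlg, inner_inv_apply]
  exact (hgc δ (hΔ.subset hδ)).1 (hΔ.inner_pos δ hδ)

/-- Take `k` minimising `‖k d - c‖`: reflecting in a root separating `k d` from `c` would bring it
closer. -/
theorem exists_mem_forall_inner_mul_inner_nonneg {K : Subgroup (V ≃ₗᵢ[ℝ] V)}
    (hK : (K : Set (V ≃ₗᵢ[ℝ] V)).Finite) (c d : V) :
    ∃ k ∈ K, ∀ α ∈ rootsOf K, 0 ≤ ⟪α, c⟫ * ⟪α, k d⟫ := by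
  obtain ⟨k, hk, hmin⟩ := Set.exists_min_image _ (fun k => ‖k d - c‖) hK ⟨1, K.one_mem⟩
  refine ⟨k, hk, fun α hα => not_lt.1 fun hlt => ?_⟩
  have hle : ‖k d - c‖ ≤ ‖reflectionAlong α (k d) - c‖ := hmin _ (K.mul_mem hα.2 hk)
  have hsq := norm_reflectionAlong_sub_sq hα.1 (k d) c
  nlinarith [norm_nonneg (k d - c), norm_nonneg (reflectionAlong α (k d) - c)]

def chamberStabilizer (Ψ : Set V) (c : V) : Subgroup (V ≃ₗᵢ[ℝ] V) where
  carrier := {g | (∀ α, g α ∈ Ψ ↔ α ∈ Ψ) ∧ SameSide Ψ c (g c)}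
  one_mem' := ⟨fun _ => Iff.rfl, fun _ _ => Iff.rfl⟩
  mul_mem' := by
    rintro g h ⟨hgΨ, hgc⟩ ⟨hhΨ, hhc⟩
    refine ⟨fun α => (hgΨ _).trans (hhΨ α), fun α hα => ?_⟩
    have hα' : g⁻¹ α ∈ Ψ := (hgΨ _).1 (by simpa using hα)
    rw [LinearIsometryEquiv.coe_mul, Function.comp_apply, ← inner_inv_apply]
    exact (hgc α hα).trans (by rw [← inner_inv_apply]; exact hhc _ hα')
  inv_mem' := by
    rintro g ⟨hgΨ, hgc⟩
    refine ⟨fun α => (hgΨ _).symm.trans (by simp), fun α hα => ?_⟩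
    rw [inner_apply_inv]
    simpa using (hgc (g α) ((hgΨ α).2 hα)).symm

theorem mul_add_pos_of_abs_lt {a e : ℝ} (h : |e| < |a|) : 0 < a * (a + e) := by
  rcases le_or_gt 0 a with ha | ha
  · rw [abs_of_nonneg ha] at h
    nlinarith [neg_abs_le e, abs_nonneg e]
  · rw [abs_of_neg ha] at h
    nlinarith [le_abs_self e, abs_nonneg e]

theorem exists_mem_forall_inner_ne_zero (X : Submodule ℝ V) {S : Set V} (hS : S.Finite)
    (hSX : ∀ α ∈ S, ∃ x ∈ X, ⟪α, x⟫ ≠ 0) : ∃ x ∈ X, ∀ α ∈ S, ⟪α, x⟫ ≠ 0 := by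
  have := hS.to_subtype
  obtain ⟨x, hx, h⟩ := Module.Dual.exists_forall_mem_ne_zero_of_forall_exists X
    (fun α : S => innerₗ V (α : V)) fun α => hSX α α.2
  exact ⟨x, hx, fun α hα => h ⟨α, hα⟩⟩

/-- `c = x₀ + ε • v` with `x₀ ∈ X` off every hyperplane `αᗮ` not containing `X`, `v` regular and
`ε` small. -/
theorem exists_isRegularVector_forall_sameSide {Φ : Set V} (hΦfin : Φ.Finite)
    (hΦ : ∀ α ∈ Φ, α ≠ 0) (X : Submodule ℝ V) :
    ∃ c : V, IsRegularVector Φ c ∧ ∀ p : V ≃ₗᵢ[ℝ] V, (∀ x ∈ X, p x = x) →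
      SameSide {α ∈ Φ | ∃ x ∈ X, ⟪α, x⟫ ≠ 0} c (p c) := by
  set S := {α ∈ Φ | ∃ x ∈ X, ⟪α, x⟫ ≠ 0}
  have hSfin : S.Finite := hΦfin.subset (Set.sep_subset _ _)
  obtain ⟨x₀, hx₀X, hx₀⟩ := exists_mem_forall_inner_ne_zero X hSfin fun α hα => hα.2
  obtain ⟨v, -, hv⟩ := exists_mem_forall_inner_ne_zero ⊤ hΦfin fun α hα =>
    ⟨α, trivial, by simpa using hΦ α hα⟩
  obtain ⟨ε, hεS, hε⟩ : ∃ ε : ℝ, (∀ α ∈ S, ε * (‖α‖ * ‖v‖) < |⟪α, x₀⟫|) ∧ 0 < ε := by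
    refine ((hSfin.eventually_all.2 fun α hα => ?_).and
      (self_mem_nhdsWithin (s := Set.Ioi 0) (a := (0 : ℝ)))).exists
    exact nhdsWithin_le_nhds <| Filter.Tendsto.eventually_lt_const (v := 0)
      (by simpa using hx₀ α hα) ((continuous_id.mul continuous_const).tendsto' 0 _ (zero_mul _))
  have hsign : ∀ α ∈ S, ∀ u : V, ‖u‖ = ‖v‖ → 0 < ⟪α, x₀⟫ * ⟪α, x₀ + ε • u⟫ := by
    intro α hα u hu
    rw [inner_add_right, real_inner_smul_right]
    refine mul_add_pos_of_abs_lt ?_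
    calc |ε * ⟪α, u⟫| ≤ ε * (‖α‖ * ‖u‖) := by
          rw [abs_mul, abs_of_pos hε]; gcongr; exact abs_real_inner_le_norm α u
      _ < |⟪α, x₀⟫| := by rw [hu]; exact hεS α hα
  refine ⟨x₀ + ε • v, fun α hα => ?_, fun p hp α hα => ?_⟩
  · by_cases hαS : α ∈ S
    · exact right_ne_zero_of_mul (hsign α hαS v rfl).ne'
    · have h0 : ⟪α, x₀⟫ = 0 := by
        by_contra h
        exact hαS ⟨hα, x₀, hx₀X, h⟩
      rw [inner_add_right, h0, zero_add, real_inner_smul_right]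
      exact mul_ne_zero hε.ne' (hv α hα)
  · rw [map_add, map_smul, hp x₀ hx₀X]
    exact (pos_iff_pos_of_mul_pos (hsign α hα v rfl)).symm.trans
      (pos_iff_pos_of_mul_pos (hsign α hα (p v) (p.norm_map v)))

section Parabolic

variable {W : Subgroup (V ≃ₗᵢ[ℝ] V)}

theorem isUnitRootSystem_rootsOf (hW : (W : Set (V ≃ₗᵢ[ℝ] V)).Finite) :
    IsUnitRootSystem (finite_rootsOf hW).toFinset := by
  refine ⟨fun α hα => ((finite_rootsOf hW).mem_toFinset.1 hα).1, fun α hα β hβ => ?_⟩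
  rw [Set.Finite.mem_toFinset] at hα hβ ⊢
  exact (apply_mem_rootsOf_iff (Subgroup.le_normalizer hα.2)).2 hβ

theorem le_closure_rootsOf (hW : W = Subgroup.closure {r | r ∈ W ∧ IsReflection r}) :
    W ≤ Subgroup.closure (reflectionAlong '' rootsOf W) := by
  refine hW.le.trans ((Subgroup.closure_le _).2 fun r ⟨hrW, hr⟩ => ?_)
  obtain ⟨α, hα, rfl⟩ := hr.exists_eq_reflectionAlong
  exact Subgroup.subset_closure ⟨α, ⟨hα, hrW⟩, rfl⟩

theorem pointwiseStabilizer_inf_chamberStabilizer_eq_bot (hWfin : (W : Set (V ≃ₗᵢ[ℝ] V)).Finite)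
    (hWgen : W = Subgroup.closure {r | r ∈ W ∧ IsReflection r}) {X : Submodule ℝ V} {c : V}
    (hc : IsRegularVector (rootsOf W) c) (hcX : ∀ p : V ≃ₗᵢ[ℝ] V, (∀ x ∈ X, p x = x) →
      SameSide {α ∈ rootsOf W | ∃ x ∈ X, ⟪α, x⟫ ≠ 0} c (p c)) :
    pointwiseStabilizer W X ⊓ chamberStabilizer (rootsOf (pointwiseStabilizer W X)) c = ⊥ := by
  rw [eq_bot_iff]
  rintro p ⟨⟨hpW, hpX⟩, -, hpc⟩
  have hfree := eq_one_of_sameSide (c := c) (isUnitRootSystem_rootsOf hWfin)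
  rw [Set.Finite.coe_toFinset] at hfree
  refine hfree hc (le_closure_rootsOf hWgen hpW) fun α hα => ?_
  by_cases hαX : ∃ x ∈ X, ⟪α, x⟫ ≠ 0
  · exact hcX p hpX α ⟨hα, hαX⟩
  · push Not at hαX
    exact hpc α ⟨hα.1, hα.2, fun x hx => reflectionAlong_of_inner_eq_zero (hαX x hx)⟩

theorem exists_mul_mem_chamberStabilizer (hWfin : (W : Set (V ≃ₗᵢ[ℝ] V)).Finite)
    {X : Submodule ℝ V} {c : V} (hc : IsRegularVector (rootsOf W) c)
    {n : V ≃ₗᵢ[ℝ] V} (hn : n ∈ W ⊓ Subgroup.normalizer (pointwiseStabilizer W X : Set _)) :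
    ∃ k ∈ pointwiseStabilizer W X,
      k * n ∈ chamberStabilizer (rootsOf (pointwiseStabilizer W X)) c := by
  set P := pointwiseStabilizer W X
  have hPW : P ≤ W := fun p hp => hp.1
  obtain ⟨k, hkP, hk⟩ := exists_mem_forall_inner_mul_inner_nonneg (hWfin.subset hPW) c (n c)
  have hkn : k * n ∈ W ⊓ Subgroup.normalizer (P : Set _) :=
    mul_mem ⟨hPW hkP, Subgroup.le_normalizer hkP⟩ hn
  refine ⟨k, hkP, fun α => apply_mem_rootsOf_iff hkn.2, fun α hα => ?_⟩
  have hαW := rootsOf_mono hPW hα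
  have hne : ⟪α, (k * n) c⟫ ≠ 0 := by
    rw [← inner_inv_apply]
    exact hc _ ((apply_mem_rootsOf_iff (Subgroup.le_normalizer (inv_mem hkn.1))).2 hαW)
  exact pos_iff_pos_of_mul_pos ((hk α hα).lt_of_ne (mul_ne_zero (hc α hαW) hne).symm)

end Parabolic

/-- Every parabolic subgroup `P = Z_W(X)` of a finite real reflection group `W` has a
complement in its normalizer `N_W(P) = W ⊓ P.normalizer`. -/
theorem parabolic_has_complement_in_normalizer
    (W : Subgroup (V ≃ₗᵢ[ℝ] V))
    (hWfin : (W : Set (V ≃ₗᵢ[ℝ] V)).Finite)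
    (hWgen : W = Subgroup.closure {r : V ≃ₗᵢ[ℝ] V | r ∈ W ∧ IsReflection r})
    (X : Submodule ℝ V) (P : Subgroup (V ≃ₗᵢ[ℝ] V))
    (hP : P = pointwiseStabilizer W (X : Set V)) :
    ∃ H : Subgroup (V ≃ₗᵢ[ℝ] V), H ≤ W ⊓ Subgroup.normalizer (P : Set (V ≃ₗᵢ[ℝ] V)) ∧ P ⊓ H = ⊥ ∧
      ∀ n ∈ W ⊓ Subgroup.normalizer (P : Set (V ≃ₗᵢ[ℝ] V)), ∃ p ∈ P, ∃ h ∈ H, n = p * h := by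
  subst hP
  obtain ⟨c, hc, hcX⟩ := exists_isRegularVector_forall_sameSide (finite_rootsOf hWfin)
    (fun _ hα => (isUnitRootSystem_rootsOf hWfin).ne_zero (by simpa using hα)) X
  refine ⟨W ⊓ Subgroup.normalizer (pointwiseStabilizer W X : Set (V ≃ₗᵢ[ℝ] V)) ⊓
    chamberStabilizer (rootsOf (pointwiseStabilizer W X)) c, inf_le_left, ?_, fun n hn => ?_⟩
  · exact eq_bot_iff.2 <| (inf_le_inf_left _ inf_le_right).trans
      (pointwiseStabilizer_inf_chamberStabilizer_eq_bot hWfin hWgen hc hcX).le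
  · obtain ⟨k, hkP, hkn⟩ := exists_mul_mem_chamberStabilizer hWfin hc hn
    refine ⟨k⁻¹, inv_mem hkP, k * n, ⟨mul_mem ⟨hkP.1, Subgroup.le_normalizer hkP⟩ hn, hkn⟩, ?_⟩
    group
end

section
/- Let F = {a ∈ α : for all k, f(k) = f(a) implies k = a} be the set of points lying in singleton fibres of f. Then the subgroup of Perm(α) generated by the set of transpositions t such that every transposition s ∈ P satisfies s·t = t·s and s ≠ t equals the subgroup {σ ∈ Perm(α) : σ(a) = a for every a ∉ F}, the full symmetric group on the fixed points of P. -/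
/-- The Young-type subgroup of `Equiv.Perm α` associated to `f : α → ι`: the permutations
preserving every fibre of `f` (the pointwise stabilizer of the fibre partition of `f`). -/
def youngSubgroup {α ι : Type*} (f : α → ι) : Subgroup (Equiv.Perm α) where
  carrier := {σ | ∀ a : α, f (σ a) = f a}
  one_mem' := fun _ => rfl
  mul_mem' := fun {σ τ} hσ hτ a => (hσ (τ a)).trans (hτ a)
  inv_mem' := fun {σ} hσ a => by
    have h := hσ (σ⁻¹ a)
    rw [show σ (σ⁻¹ a) = a from σ.apply_symm_apply a] at h
    exact h.symm

/-- The subgroup of permutations of `α` supported on a set `F`: those fixing every point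
outside `F`; for `F` the set of fixed points of the Young subgroup `P`, this is the full
symmetric group on the fixed points of `P`. -/
def fullPermOn {α : Type*} (F : Set α) : Subgroup (Equiv.Perm α) where
  carrier := {σ | ∀ a ∉ F, σ a = a}
  one_mem' := fun _ _ => rfl
  mul_mem' := fun {σ τ} hσ hτ a ha => by
    have h : (σ * τ) a = σ (τ a) := rfl
    rw [h, hτ a ha, hσ a ha]
  inv_mem' := fun {σ} hσ a ha => by
    conv_lhs => rw [← hσ a ha]
    exact σ.symm_apply_apply a

/-! The transpositions of the Young subgroup `P` are the `swap a b` with `f a = f b`, and they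
move only points of non-singleton fibres. A transposition `swap x y` commutes with, and differs
from, all of them exactly when `x` and `y` lie in singleton fibres: if `f k = f x` with `k ≠ x`,
then `swap x k ∈ P` either equals `swap x y` or fails to commute with it. So the generating set is
the set of all transpositions of the singleton-fibre points, and these generate the symmetric group
on that set. -/

open Equiv Equiv.Perm Subgroup

section

variable {α ι : Type*}

def singletonFibres (f : α → ι) : Set α := {a | ∀ k, f k = f a → k = a}

variable [DecidableEq α]

def perpSwaps (f : α → ι) : Set (Perm α) :=
  {t | t.IsSwap ∧ ∀ s ∈ youngSubgroup f, s.IsSwap → s * t = t * s ∧ s ≠ t}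

theorem swap_mem_youngSubgroup_iff (f : α → ι) {x y : α} :
    swap x y ∈ youngSubgroup f ↔ f x = f y := by
  refine ⟨fun h => by simpa using (h x).symm, fun h a => ?_⟩
  rw [swap_apply_def]
  split_ifs with hax hay
  · rw [hax, h]
  · rw [hay, h]
  · rfl

theorem fullPermOn_eq_range_ofSubtype [Fintype α] (F : Set α) [DecidablePred (· ∈ F)] :
    fullPermOn F = (ofSubtype : Perm F →* Perm α).range := by
  ext σ
  rw [mem_range_ofSubtype_iff]
  exact ⟨fun h a ha => by_contra fun haF => mem_support.mp ha (h a haF),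
    fun h a haF => notMem_support.mp fun ha => haF (h ha)⟩

theorem closure_swaps_eq_fullPermOn [Fintype α] (F : Set α) :
    closure {t | ∃ x ∈ F, ∃ y ∈ F, x ≠ y ∧ swap x y = t} = fullPermOn F := by
  classical
  rw [fullPermOn_eq_range_ofSubtype, MonoidHom.range_eq_map, ← closure_isSwap,
    MonoidHom.map_closure]
  congr 1
  ext t
  constructor
  · rintro ⟨x, hx, y, hy, hxy, rfl⟩
    exact ⟨swap ⟨x, hx⟩ ⟨y, hy⟩, ⟨_, _, by simpa using hxy, rfl⟩, ofSubtype_swap_eq _ _⟩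
  · rintro ⟨_, ⟨x, y, hxy, rfl⟩, rfl⟩
    exact ⟨x, x.2, y, y.2, Subtype.coe_ne_coe.mpr hxy, (ofSubtype_swap_eq x y).symm⟩

theorem mem_singletonFibres_of_swap_mem_perpSwaps {f : α → ι} {x y : α} (hxy : x ≠ y)
    (h : swap x y ∈ perpSwaps f) : x ∈ singletonFibres f := by
  intro k hk
  by_contra hkx
  have hs : swap x k ∈ youngSubgroup f := (swap_mem_youngSubgroup_iff f).mpr hk.symm
  obtain ⟨hcomm, hne⟩ := h.2 _ hs ⟨x, k, Ne.symm hkx, rfl⟩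
  obtain rfl | hky := eq_or_ne k y
  · exact hne rfl
  · refine hkx ?_
    simpa [swap_apply_of_ne_of_ne (Ne.symm hxy) (Ne.symm hky)] using congrArg (· y) hcomm

theorem swap_mem_perpSwaps {f : α → ι} {x y : α} (hxy : x ≠ y) (hx : x ∈ singletonFibres f)
    (hy : y ∈ singletonFibres f) : swap x y ∈ perpSwaps f := by
  refine ⟨⟨x, y, hxy, rfl⟩, ?_⟩
  rintro _ hs ⟨a, b, hab, rfl⟩
  have hfab : f a = f b := (swap_mem_youngSubgroup_iff f).mp hs
  have haF : a ∉ singletonFibres f := fun ha => hab (ha b hfab.symm).symm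
  have hbF : b ∉ singletonFibres f := fun hb => hab (hb a hfab)
  have hax : a ≠ x := fun h => haF (h ▸ hx)
  have hay : a ≠ y := fun h => haF (h ▸ hy)
  have hbx : b ≠ x := fun h => hbF (h ▸ hx)
  have hby : b ≠ y := fun h => hbF (h ▸ hy)
  refine ⟨(disjoint_swap_swap (by simp [hab, hax, hay, hbx, hby, hxy])).commute, fun h => hab ?_⟩
  simpa [swap_apply_of_ne_of_ne hax hay, eq_comm] using congrArg (· a) h

theorem perpSwaps_eq (f : α → ι) :
    perpSwaps f = {t | ∃ x ∈ singletonFibres f, ∃ y ∈ singletonFibres f, x ≠ y ∧ swap x y = t} := by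
  ext t
  constructor
  · rintro ht
    obtain ⟨x, y, hxy, rfl⟩ := ht.1
    refine ⟨x, mem_singletonFibres_of_swap_mem_perpSwaps hxy ht, y, ?_, hxy, rfl⟩
    rw [swap_comm] at ht
    exact mem_singletonFibres_of_swap_mem_perpSwaps hxy.symm ht
  · rintro ⟨x, hx, y, hy, hxy, rfl⟩
    exact swap_mem_perpSwaps hxy hx hy

end

theorem closure_perp_swaps_eq_fullPermOn_singleton_fibres_general
    {α ι : Type*} [DecidableEq α] [Fintype α] (f : α → ι) :
    Subgroup.closure {t : Equiv.Perm α | t.IsSwap ∧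
        ∀ s ∈ youngSubgroup f, s.IsSwap → s * t = t * s ∧ s ≠ t}
      = fullPermOn {a : α | ∀ k, f k = f a → k = a} := by
  change closure (perpSwaps f) = fullPermOn (singletonFibres f)
  rw [perpSwaps_eq, closure_swaps_eq_fullPermOn]

/-- The subgroup generated by the transpositions orthogonal to every transposition of the
Young subgroup `P` is the full symmetric group on the points in singleton fibres of `f`. -/
theorem closure_perp_swaps_eq_fullPermOn_singleton_fibres
    {α ι : Type*} [DecidableEq α] [DecidableEq ι] [Fintype α] (f : α → ι) :
    Subgroup.closure {t : Equiv.Perm α | t.IsSwap ∧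
        ∀ s ∈ youngSubgroup f, s.IsSwap → s * t = t * s ∧ s ≠ t}
      = fullPermOn {a : α | ∀ k, f k = f a → k = a} :=
  closure_perp_swaps_eq_fullPermOn_singleton_fibres_general f
end
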